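/- arXiv:1910.12081 — 6 statements merged into one kernel-verified Lean document; each statement's English description precedes it below -/
import Mathlib

section
/- Suppose g: ℝ^{n+m} → ℝ is L-Lipschitz (g(r̃) - g(r) ≤ L‖r̃ - r‖), V satisfies c_l‖x-z‖² ≤ V(x,z,v) and ‖κ(x,z,v)-v‖² ≤ κ_max V(x,z,v). Then for all (x,z,v) with V(x,z,v) ≤ c², g(x, κ(x,z,v)) - g(z, v) ≤ c·L·√(1/c_l + κ_max). -/
/-- a Lipschitz constraint function (w.r.t. the Euclidean pair
norm `√(‖a‖² + ‖b‖²)`) satisfies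
`g(x,κ(x,z,v)) - g(z,v) ≤ c·L·√(1/c_l + κ_max)` whenever `V(x,z,v) ≤ c²`. -/
theorem stmt_4 {n m : ℕ}
    (g : EuclideanSpace ℝ (Fin n) → EuclideanSpace ℝ (Fin m) → ℝ)
    (V : EuclideanSpace ℝ (Fin n) → EuclideanSpace ℝ (Fin n) →
          EuclideanSpace ℝ (Fin m) → ℝ)
    (κ : EuclideanSpace ℝ (Fin n) → EuclideanSpace ℝ (Fin n) →
          EuclideanSpace ℝ (Fin m) → EuclideanSpace ℝ (Fin m))
    (L cl κmax : ℝ) (hL : 0 ≤ L) (hcl : 0 < cl) (hκmax : 0 < κmax)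
    (hLip : ∀ x z u v, g x u - g z v ≤ L * Real.sqrt (‖x - z‖ ^ 2 + ‖u - v‖ ^ 2))
    (hlow : ∀ x z v, cl * ‖x - z‖ ^ 2 ≤ V x z v)
    (hfb : ∀ x z v, ‖κ x z v - v‖ ^ 2 ≤ κmax * V x z v) :
    ∀ x z v (c : ℝ), 0 ≤ c → V x z v ≤ c ^ 2 →
      g x (κ x z v) - g z v ≤ c * L * Real.sqrt (1 / cl + κmax) := by
  intro x z v c hc hV
  have h1 := hlow x z v
  have h2 := hfb x z v
  have hx : ‖x - z‖ ^ 2 ≤ c ^ 2 / cl := by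
    rw [le_div_iff₀ hcl]; nlinarith
  have hu : ‖κ x z v - v‖ ^ 2 ≤ κmax * c ^ 2 := by nlinarith
  have key : ‖x - z‖ ^ 2 + ‖κ x z v - v‖ ^ 2 ≤ c ^ 2 * (1 / cl + κmax) := by
    have : c ^ 2 / cl = c ^ 2 * (1 / cl) := by ring
    nlinarith
  calc g x (κ x z v) - g z v ≤ L * Real.sqrt (‖x - z‖ ^ 2 + ‖κ x z v - v‖ ^ 2) :=
        hLip x z _ v
    _ ≤ L * Real.sqrt (c ^ 2 * (1 / cl + κmax)) := by
        exact mul_le_mul_of_nonneg_left (Real.sqrt_le_sqrt key) hL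
    _ = c * L * Real.sqrt (1 / cl + κmax) := by
        rw [Real.sqrt_mul (by positivity), Real.sqrt_sq hc]; ring
end

section
/- Let α_f, α_l ∈ K_∞ (continuous, strictly increasing, unbounded, zero at zero). There exists ĥ ∈ K_∞ such that ĥ(s) ≤ α_l(α_f^{-1}(s)) for all s ≥ 0 and the function s ↦ s - ĥ(s) belongs to class K (continuous, strictly increasing, zero at zero). -/
open Filter Set

/-- Key construction: given a strictly increasing `m` with `m 0 = 0` tending to infinity,
the half of the 1-Lipschitz inf-convolution regularization of `m` gives the desired `h`. -/
private lemma key_lemma (m : ℝ → ℝ) (hm0 : m 0 = 0)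
    (hmono : StrictMonoOn m (Set.Ici 0))
    (htop : Filter.Tendsto m Filter.atTop Filter.atTop) :
    ∃ h : ℝ → ℝ,
      (ContinuousOn h (Set.Ici 0) ∧ StrictMonoOn h (Set.Ici 0) ∧
        h 0 = 0 ∧ Filter.Tendsto h Filter.atTop Filter.atTop) ∧
      (∀ s : ℝ, 0 ≤ s → h s ≤ m s) ∧
      (ContinuousOn (fun s => s - h s) (Set.Ici 0) ∧
        StrictMonoOn (fun s => s - h s) (Set.Ici 0) ∧
        (0 : ℝ) - h 0 = 0) := by
  have hmnn : ∀ s : ℝ, 0 ≤ s → 0 ≤ m s := by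
    intro s hs
    have := hmono.monotoneOn (Set.self_mem_Ici) (Set.mem_Ici.2 hs) hs
    linarith [hm0 ▸ this]
  set ρ : ℝ → ℝ := fun s => sInf ((fun t => m t + (s - t)) '' Set.Icc 0 s) with hρdef
  have hne : ∀ s : ℝ, 0 ≤ s → ((fun t => m t + (s - t)) '' Set.Icc 0 s).Nonempty :=
    fun s hs => (Set.nonempty_Icc.2 hs).image _
  have hlb : ∀ s : ℝ, 0 ≤ s → ∀ x ∈ ((fun t => m t + (s - t)) '' Set.Icc 0 s), 0 ≤ x := by
    rintro s hs x ⟨t, ⟨ht0, hts⟩, rfl⟩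
    have := hmnn t ht0
    simp only
    linarith
  have hbdd : ∀ s : ℝ, 0 ≤ s → BddBelow ((fun t => m t + (s - t)) '' Set.Icc 0 s) :=
    fun s hs => ⟨0, fun x hx => hlb s hs x hx⟩
  have hρnn : ∀ s : ℝ, 0 ≤ s → 0 ≤ ρ s := fun s hs => le_csInf (hne s hs) (hlb s hs)
  have hρle : ∀ s : ℝ, 0 ≤ s → ρ s ≤ m s := by
    intro s hs
    have hmem : m s + (s - s) ∈ ((fun t => m t + (s - t)) '' Set.Icc 0 s) :=
      ⟨s, ⟨hs, le_refl s⟩, rfl⟩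
    have := csInf_le (hbdd s hs) hmem
    simpa using this
  -- 1-Lipschitz upper increment bound
  have hlip : ∀ s s' : ℝ, 0 ≤ s → s ≤ s' → ρ s' ≤ ρ s + (s' - s) := by
    intro s s' hs hss'
    have h1 : ρ s' - (s' - s) ≤ ρ s := by
      apply le_csInf (hne s hs)
      rintro x ⟨t, ⟨ht0, hts⟩, rfl⟩
      have hmem : m t + (s' - t) ∈ ((fun t => m t + (s' - t)) '' Set.Icc 0 s') :=
        ⟨t, ⟨ht0, hts.trans hss'⟩, rfl⟩
      have := csInf_le (hbdd s' (hs.trans hss')) hmem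
      simp only
      linarith
    linarith
  -- strict monotonicity of ρ
  have hρsm : ∀ s s' : ℝ, 0 ≤ s → s < s' → ρ s < ρ s' := by
    intro s s' hs hss'
    set u : ℝ := (s + s') / 2 with hu
    have hsu : s < u := by rw [hu]; linarith
    have hus' : u < s' := by rw [hu]; linarith
    have hu0 : (0 : ℝ) ≤ u := hs.trans hsu.le
    have hmu : m s < m u := hmono (Set.mem_Ici.2 hs) (Set.mem_Ici.2 hu0) hsu
    set δ : ℝ := min ((s' - s) / 2) (m u - m s) with hδdef
    have hδpos : 0 < δ := lt_min (by linarith) (by linarith)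
    have hstep : ρ s + δ ≤ ρ s' := by
      apply le_csInf (hne s' (hs.trans hss'.le))
      rintro x ⟨t, ⟨ht0, hts'⟩, rfl⟩
      simp only
      rcases le_or_gt t s with h1 | h1
      · have hmem : m t + (s - t) ∈ ((fun t => m t + (s - t)) '' Set.Icc 0 s) :=
          ⟨t, ⟨ht0, h1⟩, rfl⟩
        have hc := csInf_le (hbdd s hs) hmem
        have hδle : δ ≤ (s' - s) / 2 := min_le_left _ _
        linarith
      · rcases le_or_gt t u with h2 | h2
        · have hmt : m s ≤ m t := (hmono (Set.mem_Ici.2 hs) (Set.mem_Ici.2 ht0) h1).le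
          have hρm := hρle s hs
          have hδle : δ ≤ (s' - s) / 2 := min_le_left _ _
          have ht' : s' - t ≥ (s' - s) / 2 := by rw [hu] at h2; linarith
          linarith
        · have hmt : m u ≤ m t := (hmono (Set.mem_Ici.2 hu0) (Set.mem_Ici.2 ht0) h2).le
          have hρm := hρle s hs
          have hδle : δ ≤ m u - m s := min_le_right _ _
          linarith
    linarith
  have hρmono : ∀ s s' : ℝ, 0 ≤ s → s ≤ s' → ρ s ≤ ρ s' := by
    intro s s' hs hss'
    rcases hss'.eq_or_lt with rfl | h
    · exact le_rfl
    · exact (hρsm s s' hs h).le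
  have hρ0 : ρ 0 = 0 := by
    have h1 := hρnn 0 le_rfl
    have h2 := hρle 0 le_rfl
    rw [hm0] at h2
    linarith
  -- lower bound giving unboundedness
  have hlow : ∀ s : ℝ, 0 ≤ s → min (m (s / 2)) (s / 2) ≤ ρ s := by
    intro s hs
    apply le_csInf (hne s hs)
    rintro x ⟨t, ⟨ht0, hts⟩, rfl⟩
    simp only
    rcases le_or_gt t (s / 2) with h1 | h1
    · have := hmnn t ht0
      have h2 : min (m (s / 2)) (s / 2) ≤ s / 2 := min_le_right _ _
      linarith
    · have hmt : m (s / 2) ≤ m t :=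
        (hmono (Set.mem_Ici.2 (by linarith)) (Set.mem_Ici.2 ht0) h1).le
      have h2 : min (m (s / 2)) (s / 2) ≤ m (s / 2) := min_le_left _ _
      linarith
  -- continuity of ρ on [0,∞)
  have hρcont : ContinuousOn ρ (Set.Ici 0) := by
    apply LipschitzOnWith.continuousOn (K := 1)
    rw [lipschitzOnWith_iff_dist_le_mul]
    intro x hx y hy
    simp only [NNReal.coe_one, one_mul, Real.dist_eq]
    have hx0 : (0 : ℝ) ≤ x := hx
    have hy0 : (0 : ℝ) ≤ y := hy
    rcases le_total x y with h | h
    · have h1 := hlip x y hx0 h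
      have h2 := hρmono x y hx0 h
      rw [abs_sub_comm (ρ x) (ρ y), abs_of_nonneg (by linarith),
        abs_sub_comm x y, abs_of_nonneg (by linarith)]
      linarith
    · have h1 := hlip y x hy0 h
      have h2 := hρmono y x hy0 h
      rw [abs_of_nonneg (by linarith), abs_of_nonneg (by linarith)]
      linarith
  refine ⟨fun s => ρ s / 2, ⟨hρcont.div_const 2, ?_, by simp [hρ0], ?_⟩,
    ?_, ?_, ?_, by simp [hρ0]⟩
  · -- strict mono of h
    intro a ha b hb hab
    have := hρsm a b ha hab
    linarith
  · -- tendsto atTop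
    rw [tendsto_atTop]
    intro b
    have h2 : Filter.Tendsto (fun s : ℝ => s / 2) atTop atTop :=
      Filter.tendsto_id.atTop_div_const two_pos
    have h1 : Filter.Tendsto (fun s : ℝ => m (s / 2)) atTop atTop := htop.comp h2
    filter_upwards [h1.eventually_ge_atTop (2 * b), h2.eventually_ge_atTop (2 * b),
      eventually_ge_atTop (0 : ℝ)] with s hb1 hb2 hs0
    have hmin : 2 * b ≤ min (m (s / 2)) (s / 2) := le_min hb1 hb2
    have := hlow s hs0
    linarith
  · -- h ≤ m
    intro s hs
    have h1 := hρle s hs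
    have h2 := hρnn s hs
    linarith
  · -- continuity of id - h
    exact continuousOn_id.sub (hρcont.div_const 2)
  · -- strict mono of id - h
    intro a ha b hb hab
    have ha0 : (0 : ℝ) ≤ a := ha
    have := hlip a b ha0 hab.le
    simp only
    linarith

/-- Jiang–Wang Lemma B.1: given `α_f, α_l ∈ K_∞`, there exists
`ĥ ∈ K_∞` with `ĥ ≤ α_l ∘ α_f⁻¹` on `[0,∞)` and `id - ĥ ∈ K`. -/
theorem stmt_10 (αf αl αfinv : ℝ → ℝ)
    (hαfK : ContinuousOn αf (Set.Ici 0) ∧ StrictMonoOn αf (Set.Ici 0) ∧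
      αf 0 = 0 ∧ Filter.Tendsto αf Filter.atTop Filter.atTop)
    (hαlK : ContinuousOn αl (Set.Ici 0) ∧ StrictMonoOn αl (Set.Ici 0) ∧
      αl 0 = 0 ∧ Filter.Tendsto αl Filter.atTop Filter.atTop)
    (hinv : ∀ s : ℝ, 0 ≤ s → 0 ≤ αfinv s ∧ αf (αfinv s) = s) :
    ∃ h : ℝ → ℝ,
      (ContinuousOn h (Set.Ici 0) ∧ StrictMonoOn h (Set.Ici 0) ∧
        h 0 = 0 ∧ Filter.Tendsto h Filter.atTop Filter.atTop) ∧
      (∀ s : ℝ, 0 ≤ s → h s ≤ αl (αfinv s)) ∧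
      (ContinuousOn (fun s => s - h s) (Set.Ici 0) ∧
        StrictMonoOn (fun s => s - h s) (Set.Ici 0) ∧
        (0 : ℝ) - h 0 = 0) := by
  obtain ⟨hfc, hfm, hf0, hftop⟩ := hαfK
  obtain ⟨hlc, hlm, hl0, hltop⟩ := hαlK
  -- αfinv 0 = 0
  have hinv0 : αfinv 0 = 0 := by
    have h := hinv 0 le_rfl
    apply hfm.injOn (Set.mem_Ici.2 h.1) Set.self_mem_Ici
    rw [h.2, hf0]
  -- αfinv strictly increasing
  have hinvmono : ∀ s t : ℝ, 0 ≤ s → s < t → αfinv s < αfinv t := by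
    intro s t hs hst
    by_contra hc
    push_neg at hc
    have h1 := hinv s hs
    have h2 := hinv t (hs.trans hst.le)
    have := hfm.monotoneOn (Set.mem_Ici.2 h2.1) (Set.mem_Ici.2 h1.1) hc
    rw [h1.2, h2.2] at this
    linarith
  -- αfinv tends to infinity
  have hinvtop : Filter.Tendsto αfinv atTop atTop := by
    rw [tendsto_atTop]
    intro M
    filter_upwards [eventually_ge_atTop (max (αf (max M 0)) 0)] with s hsge
    have hM0 : (0 : ℝ) ≤ max M 0 := le_max_right _ _
    have hs0 : (0 : ℝ) ≤ s := le_trans (le_max_right _ _) hsge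
    have h1 := hinv s hs0
    have hkey : max M 0 ≤ αfinv s := by
      by_contra hc
      push_neg at hc
      have hlt : αf (αfinv s) < αf (max M 0) :=
        hfm (Set.mem_Ici.2 h1.1) (Set.mem_Ici.2 hM0) hc
      rw [h1.2] at hlt
      have : αf (max M 0) ≤ s := le_trans (le_max_left _ _) hsge
      linarith
    exact le_trans (le_max_left _ _) hkey
  -- apply the key lemma to m = min id (αl ∘ αfinv)
  set m : ℝ → ℝ := fun s => min s (αl (αfinv s)) with hm
  have hm0 : m 0 = 0 := by simp [hm, hinv0, hl0]
  have hmmono : StrictMonoOn m (Set.Ici 0) := by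
    intro a ha b hb hab
    have ha0 : (0 : ℝ) ≤ a := ha
    have hb0 : (0 : ℝ) ≤ b := hb
    have hg : αl (αfinv a) < αl (αfinv b) :=
      hlm (Set.mem_Ici.2 (hinv a ha0).1) (Set.mem_Ici.2 (hinv b hb0).1) (hinvmono a b ha0 hab)
    exact lt_min ((min_le_left a _).trans_lt hab) ((min_le_right a _).trans_lt hg)
  have hmtop : Filter.Tendsto m atTop atTop := by
    rw [tendsto_atTop]
    intro b
    have hg : Filter.Tendsto (fun s => αl (αfinv s)) atTop atTop := hltop.comp hinvtop
    filter_upwards [eventually_ge_atTop b, hg.eventually_ge_atTop b] with s h1 h2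
    exact le_min h1 h2
  obtain ⟨h, hK, hle, hrest⟩ := key_lemma m hm0 hmmono hmtop
  exact ⟨h, hK, fun s hs => (hle s hs).trans (min_le_right _ _), hrest⟩
end

section
/- (Terminal cost invariance.) Let V_f, α_l, α_f with α_l ∘ α_f^{-1} ∈ K and id − α_l ∘ α_f^{-1} ∈ K, and suppose V_f(x⁺) ≤ V_f(x) − α_l(α_f^{-1}(V_f(x))). Let γ > 0 and d with ‖disturbance contribution‖ ≤ ε where α_f(ε) = α_l(α_f^{-1}(γ)). Then V_f(x) ≤ γ implies V_f(x⁺ + d) ≤ V_f(x⁺) + α_f(ε) ≤ γ − α_l(α_f^{-1}(γ)) + α_f(ε) = γ. -/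
/-- terminal cost invariance, Part I of the proof of Prop. 4. -/
theorem stmt_12 {X : Type*} [NormedAddCommGroup X]
    (Vf : X → ℝ) (αl αf αfinv : ℝ → ℝ)
    (γ ε : ℝ) (hγ : 0 < γ)
    (hmono : ∀ s₁ s₂ : ℝ, 0 ≤ s₁ → s₁ ≤ s₂ →
      s₁ - αl (αfinv s₁) ≤ s₂ - αl (αfinv s₂))
    (x xplus d : X)
    (hVnonneg : 0 ≤ Vf x)
    (hdec : Vf xplus ≤ Vf x - αl (αfinv (Vf x)))
    (hd : ‖d‖ ≤ ε)
    (hcont : Vf (xplus + d) ≤ Vf xplus + αf ε)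
    (hε : αf ε = αl (αfinv γ))
    (hVx : Vf x ≤ γ) :
    Vf (xplus + d) ≤ Vf xplus + αf ε ∧ Vf (xplus + d) ≤ γ := by
  refine ⟨hcont, ?_⟩
  have h := hmono (Vf x) γ hVnonneg hVx
  calc Vf (xplus + d) ≤ Vf xplus + αf ε := hcont
    _ ≤ (Vf x - αl (αfinv (Vf x))) + αf ε := by linarith
    _ ≤ (γ - αl (αfinv γ)) + αl (αfinv γ) := by rw [hε]; linarith
    _ = γ := by ring
end

section
/- (Evolution of the generalized constraint-tightening variable.) Let ρ ∈ (0,1), α̃ ∈ K_∞ with α̃(ρc) ≤ ρ^λ α̃(c) for some λ > 0, and nonnegative sequences with w_i ≤ w*_{i+1} for i = 0,…,N−1 and w*_0 ≥ w_min. Define h_k := Σ_{i=0}^{k−1} α̃(ρ^{k−1−i} w_i) and h*_k := Σ_{i=0}^{k−1} α̃(ρ^{k−1−i} w*_i). Then for k = 0,…,N−1: h_k ≤ h*_{k+1} − α̃(ρ^k w*_0), and moreover h_N ≤ ρ^λ (h*_N − α̃(ρ^{N−1} w_min)) + α̃(w*_N). -/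
/-!
Each `h_k` is a discounted sum `∑ α̃(ρ^(k-1-i) w_i)`. Peeling off the `i = 0` term of `h*_{k+1}`
leaves the same sum for the shifted sequence `w*_{i+1}`, which dominates `w_i`, so monotonicity of
`α̃` gives the first bound. For the second, `h_N` is `α̃(w_{N-1})` plus terms with one extra factor
`ρ` compared to `h_{N-1}`; homogeneity pulls that factor out as `ρ^λ`, and the first bound at
`k = N - 1` together with `w_min ≤ w*_0` finishes.
-/

open Finset

noncomputable section

/-- The paper's `h_k` (and `h*_k` for `w := w*`). -/
def tightening (α : ℝ → ℝ) (ρ : ℝ) (w : ℕ → ℝ) (k : ℕ) : ℝ :=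
  ∑ i ∈ range k, α (ρ ^ (k - 1 - i) * w i)

variable {α : ℝ → ℝ} {ρ : ℝ} {w v : ℕ → ℝ}

theorem tightening_succ_eq_shift (k : ℕ) :
    tightening α ρ w (k + 1) = tightening α ρ (fun i => w (i + 1)) k + α (ρ ^ k * w 0) := by
  rw [tightening, sum_range_succ', tightening]
  congr 1
  refine sum_congr rfl fun i hi => ?_
  rw [show k + 1 - 1 - (i + 1) = k - 1 - i by omega]

theorem tightening_le_tightening {k : ℕ} (hmono : MonotoneOn α (Set.Ici 0)) (hρ : 0 ≤ ρ)
    (hw : ∀ i, 0 ≤ w i) (hwv : ∀ i < k, w i ≤ v i) :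
    tightening α ρ w k ≤ tightening α ρ v k := by
  refine sum_le_sum fun i hi => hmono ?_ ?_ ?_
  · exact mul_nonneg (pow_nonneg hρ _) (hw i)
  · exact mul_nonneg (pow_nonneg hρ _) ((hw i).trans (hwv i (mem_range.mp hi)))
  · exact mul_le_mul_of_nonneg_left (hwv i (mem_range.mp hi)) (pow_nonneg hρ _)

theorem tightening_succ_le {lam : ℝ} (hhom : ∀ c : ℝ, 0 ≤ c → α (ρ * c) ≤ ρ ^ lam * α c)
    (hρ : 0 ≤ ρ) (hw : ∀ i, 0 ≤ w i) (k : ℕ) :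
    tightening α ρ w (k + 1) ≤ ρ ^ lam * tightening α ρ w k + α (w k) := by
  rw [tightening, sum_range_succ, Nat.add_sub_cancel, Nat.sub_self, pow_zero, one_mul,
    tightening, mul_sum]
  gcongr with i hi
  rw [show k - i = k - 1 - i + 1 by have := mem_range.mp hi; omega, pow_succ', mul_assoc]
  exact hhom _ (mul_nonneg (pow_nonneg hρ _) (hw i))

end

theorem stmt_15_general (ρ : ℝ) (hρ0 : 0 < ρ)
    (lam : ℝ)
    (αt : ℝ → ℝ) (hmono : MonotoneOn αt (Set.Ici 0))
    (hhom : ∀ c : ℝ, 0 ≤ c → αt (ρ * c) ≤ ρ ^ lam * αt c)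
    (N : ℕ) (hN : 1 ≤ N)
    (w wstar : ℕ → ℝ) (hw : ∀ i, 0 ≤ w i) (hwstar : ∀ i, 0 ≤ wstar i)
    (hdom : ∀ i < N, w i ≤ wstar (i + 1))
    (wmin : ℝ) (hwmin0 : 0 ≤ wmin) (hwmin : wmin ≤ wstar 0) :
    (∀ k < N, ∑ i ∈ Finset.range k, αt (ρ ^ (k - 1 - i) * w i)
        ≤ (∑ i ∈ Finset.range (k + 1), αt (ρ ^ (k - i) * wstar i))
            - αt (ρ ^ k * wstar 0)) ∧
    (∑ i ∈ Finset.range N, αt (ρ ^ (N - 1 - i) * w i)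
        ≤ ρ ^ lam * ((∑ i ∈ Finset.range N, αt (ρ ^ (N - 1 - i) * wstar i))
              - αt (ρ ^ (N - 1) * wmin))
          + αt (wstar N)) := by
  have part1 : ∀ k < N, tightening αt ρ w k
      ≤ tightening αt ρ wstar (k + 1) - αt (ρ ^ k * wstar 0) := fun k hk => by
    rw [tightening_succ_eq_shift, add_sub_cancel_right]
    exact tightening_le_tightening hmono hρ0.le hw fun i hi => hdom i (hi.trans hk)
  refine ⟨part1, ?_⟩
  obtain ⟨n, rfl⟩ : ∃ n, N = n + 1 := ⟨N - 1, by omega⟩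
  have hmin : αt (ρ ^ n * wmin) ≤ αt (ρ ^ n * wstar 0) :=
    hmono (mul_nonneg (pow_nonneg hρ0.le _) hwmin0)
      (mul_nonneg (pow_nonneg hρ0.le _) (hwstar 0))
      (mul_le_mul_of_nonneg_left hwmin (pow_nonneg hρ0.le _))
  have hlast : αt (w n) ≤ αt (wstar (n + 1)) := hmono (hw n) (hwstar _) (hdom n n.lt_succ_self)
  change tightening αt ρ w (n + 1)
    ≤ ρ ^ lam * (tightening αt ρ wstar (n + 1) - αt (ρ ^ n * wmin)) + αt (wstar (n + 1))
  calc tightening αt ρ w (n + 1)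
      ≤ ρ ^ lam * tightening αt ρ w n + αt (w n) := tightening_succ_le hhom hρ0.le hw n
    _ ≤ ρ ^ lam * (tightening αt ρ wstar (n + 1) - αt (ρ ^ n * wmin)) + αt (wstar (n + 1)) := by
      gcongr ?_ * ?_ + ?_
      linarith [part1 n n.lt_succ_self]

/-- evolution of the generalized constraint-tightening variable,
Parts II and IV of the proof of Lemma 1. -/
theorem stmt_15 (ρ : ℝ) (hρ0 : 0 < ρ) (hρ1 : ρ < 1)
    (lam : ℝ) (hlam : 0 < lam)
    (αt : ℝ → ℝ) (hmono : MonotoneOn αt (Set.Ici 0))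
    (hhom : ∀ c : ℝ, 0 ≤ c → αt (ρ * c) ≤ ρ ^ lam * αt c)
    (N : ℕ) (hN : 1 ≤ N)
    (w wstar : ℕ → ℝ) (hw : ∀ i, 0 ≤ w i) (hwstar : ∀ i, 0 ≤ wstar i)
    (hdom : ∀ i < N, w i ≤ wstar (i + 1))
    (wmin : ℝ) (hwmin0 : 0 ≤ wmin) (hwmin : wmin ≤ wstar 0) :
    (∀ k < N, ∑ i ∈ Finset.range k, αt (ρ ^ (k - 1 - i) * w i)
        ≤ (∑ i ∈ Finset.range (k + 1), αt (ρ ^ (k - i) * wstar i))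
            - αt (ρ ^ k * wstar 0)) ∧
    (∑ i ∈ Finset.range N, αt (ρ ^ (N - 1 - i) * w i)
        ≤ ρ ^ lam * ((∑ i ∈ Finset.range N, αt (ρ ^ (N - 1 - i) * wstar i))
              - αt (ρ ^ (N - 1) * wmin))
          + αt (wstar N)) :=
  stmt_15_general ρ hρ0 lam αt hmono hhom N hN w wstar hw hwstar hdom wmin hwmin0 hwmin
end

section
/- (Terminal invariance for the LPV polytopic tube.) Let ρ ∈ (0,1), L_w ≥ 0, c_max > 0, d̄ ≥ 0 with ρ + L_w + c_max d̄ ≤ 1. Let p(x) := max_i P_i x be a sublinear functional (p(x+y) ≤ p(x) + p(y)). Suppose s⁺ ≤ ρ s − ρ^N w + W with W ≤ d̄ + L_w (s + p(x)), and x⁺ satisfies p(x⁺) ≤ ρ p(x) and p(d_w) ≤ ρ^N w. Then s + p(x) ≤ 1/c_max implies s⁺ + p(x⁺ + d_w) ≤ 1/c_max. -/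
/-- robust positive invariance of the LPV polytopic terminal set,
eq. (38) in Part III of the proof of Prop. 6. -/
theorem stmt_18 {E : Type*} [AddCommGroup E]
    (p : E → ℝ) (hsub : ∀ x y : E, p (x + y) ≤ p x + p y)
    (ρ Lw cmax dbar : ℝ)
    (hρ0 : 0 < ρ) (hρ1 : ρ < 1) (hLw : 0 ≤ Lw) (hcmax : 0 < cmax)
    (hdbar : 0 ≤ dbar) (hsum : ρ + Lw + cmax * dbar ≤ 1)
    (N : ℕ) (s splus w W : ℝ) (x xplus dw : E)
    (hsplus : splus ≤ ρ * s - ρ ^ N * w + W)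
    (hW : W ≤ dbar + Lw * (s + p x))
    (hxplus : p xplus ≤ ρ * p x)
    (hdw : p dw ≤ ρ ^ N * w)
    (hin : s + p x ≤ 1 / cmax) (hnonneg : 0 ≤ s + p x) :
    splus + p (xplus + dw) ≤ 1 / cmax := by
  have h1 := hsub xplus dw
  have h2 : (ρ + Lw) * (s + p x) ≤ (ρ + Lw) * (1 / cmax) :=
    mul_le_mul_of_nonneg_left hin (by linarith)
  have h3 : (ρ + Lw) * (1 / cmax) + dbar ≤ 1 / cmax := by
    rw [div_eq_inv_mul]
    have hinv : (0:ℝ) < cmax⁻¹ := inv_pos.2 hcmax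
    nlinarith [mul_pos hcmax hinv, mul_inv_cancel₀ (ne_of_gt hcmax)]
  nlinarith
end

section
/- (Cost increase bound of the candidate solution.) Let ρ ∈ (0,1), w̄ ≥ 0, and α_u ∈ K_∞ of the form α_u(c) = α_c(c·M) where α_c(c) = Σ_j a_j c^j has nonnegative coefficients and M := √(1/c_l + κ_max). Then Σ_{k=0}^{N−1} α_u(ρ^k w̄) ≤ α_{c,ρ}(w̄ M), where α_{c,ρ}(c) := Σ_{k=0}^∞ α_c(ρ^k c), and consequently the total cost increase Σ_{k=0}^{N−1} α_u(ρ^k w̄) + α_f(ρ^N w̄/√c_l) ≤ α_f(w̄/√c_l) + α_{c,ρ}(w̄ M) holds for any α_f ∈ K_∞ and all N ≥ 0. -/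
/-!
The stage costs along the candidate trajectory are nonnegative (power series with nonnegative
coefficients at nonnegative arguments), so their first `N` terms are bounded by the whole
series `α_{c,ρ}`; and since `ρ ^ N ≤ 1`, monotonicity of `α_f` bounds the terminal cost
`α_f (ρ ^ N w̄ / √c_l)` by `α_f (w̄ / √c_l)`.
-/

open Finset

theorem tsum_mul_pow_nonneg {a : ℕ → ℝ} (ha : ∀ j, 0 ≤ a j) {c : ℝ} (hc : 0 ≤ c) :
    0 ≤ ∑' j, a j * c ^ j :=
  tsum_nonneg fun j => mul_nonneg (ha j) (pow_nonneg hc j)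

theorem MonotoneOn.map_mul_le_of_le_one {f : ℝ → ℝ} (hf : MonotoneOn f (Set.Ici 0))
    {t x : ℝ} (ht0 : 0 ≤ t) (ht1 : t ≤ 1) (hx : 0 ≤ x) : f (t * x) ≤ f x :=
  hf (mul_nonneg ht0 hx) hx (mul_le_of_le_one_left hx ht1)

theorem stmt_19_general (a : ℕ → ℝ) (ha : ∀ j, 0 ≤ a j)
    (ρ : ℝ) (hρ0 : 0 < ρ) (hρ1 : ρ < 1)
    (cl κmax wbar : ℝ) (hwbar : 0 ≤ wbar)
    (hsumk : Summable (fun k : ℕ =>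
      ∑' j : ℕ, a j * (ρ ^ k * (wbar * Real.sqrt (1 / cl + κmax))) ^ j))
    (αf : ℝ → ℝ)
    (hαfK : ContinuousOn αf (Set.Ici 0) ∧ StrictMonoOn αf (Set.Ici 0) ∧
      αf 0 = 0 ∧ Filter.Tendsto αf Filter.atTop Filter.atTop)
    (N : ℕ) :
    (∑ k ∈ Finset.range N,
        ∑' j : ℕ, a j * ((ρ ^ k * wbar) * Real.sqrt (1 / cl + κmax)) ^ j)
      ≤ (∑' k : ℕ, ∑' j : ℕ, a j * (ρ ^ k * (wbar * Real.sqrt (1 / cl + κmax))) ^ j) ∧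
    (∑ k ∈ Finset.range N,
        ∑' j : ℕ, a j * ((ρ ^ k * wbar) * Real.sqrt (1 / cl + κmax)) ^ j)
      + αf (ρ ^ N * wbar / Real.sqrt cl)
      ≤ αf (wbar / Real.sqrt cl)
        + ∑' k : ℕ, ∑' j : ℕ, a j * (ρ ^ k * (wbar * Real.sqrt (1 / cl + κmax))) ^ j := by
  have hstage : (∑ k ∈ range N,
        ∑' j : ℕ, a j * ((ρ ^ k * wbar) * Real.sqrt (1 / cl + κmax)) ^ j)
      ≤ ∑' k : ℕ, ∑' j : ℕ, a j * (ρ ^ k * (wbar * Real.sqrt (1 / cl + κmax))) ^ j := by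
    simp only [mul_assoc]
    exact hsumk.sum_le_tsum _ fun k _ => tsum_mul_pow_nonneg ha (by positivity)
  have hterminal : αf (ρ ^ N * wbar / Real.sqrt cl) ≤ αf (wbar / Real.sqrt cl) := by
    rw [mul_div_assoc]
    exact hαfK.2.1.monotoneOn.map_mul_le_of_le_one (by positivity)
      (pow_le_one₀ hρ0.le hρ1.le) (by positivity)
  exact ⟨hstage, by linarith⟩

/-- cost increase bound of the candidate solution,
Part VI of the proof of Theorem 1. -/
theorem stmt_19 (a : ℕ → ℝ) (ha : ∀ j, 0 ≤ a j)
    (ρ : ℝ) (hρ0 : 0 < ρ) (hρ1 : ρ < 1)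
    (cl κmax wbar : ℝ) (hcl : 0 < cl) (hκmax : 0 < κmax) (hwbar : 0 ≤ wbar)
    (hsum : ∀ c : ℝ, 0 ≤ c → Summable (fun j : ℕ => a j * c ^ j))
    (hsumk : Summable (fun k : ℕ =>
      ∑' j : ℕ, a j * (ρ ^ k * (wbar * Real.sqrt (1 / cl + κmax))) ^ j))
    (αf : ℝ → ℝ)
    (hαfK : ContinuousOn αf (Set.Ici 0) ∧ StrictMonoOn αf (Set.Ici 0) ∧
      αf 0 = 0 ∧ Filter.Tendsto αf Filter.atTop Filter.atTop)
    (N : ℕ) :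
    (∑ k ∈ Finset.range N,
        ∑' j : ℕ, a j * ((ρ ^ k * wbar) * Real.sqrt (1 / cl + κmax)) ^ j)
      ≤ (∑' k : ℕ, ∑' j : ℕ, a j * (ρ ^ k * (wbar * Real.sqrt (1 / cl + κmax))) ^ j) ∧
    (∑ k ∈ Finset.range N,
        ∑' j : ℕ, a j * ((ρ ^ k * wbar) * Real.sqrt (1 / cl + κmax)) ^ j)
      + αf (ρ ^ N * wbar / Real.sqrt cl)
      ≤ αf (wbar / Real.sqrt cl)
        + ∑' k : ℕ, ∑' j : ℕ, a j * (ρ ^ k * (wbar * Real.sqrt (1 / cl + κmax))) ^ j :=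
  stmt_19_general a ha ρ hρ0 hρ1 cl κmax wbar hwbar hsumk αf hαfK N
end
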